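/- Let F, Λ, ar, ⟦·⟧ be a set functor with a finite modal signature interpreted by predicate liftings. If Λ is separating, every interpreting predicate lifting ⟦♥⟧ is monotone, and the logic L(Λ) has one-step interpolation, then F preserves finite surjective weak pullbacks. -/

import Mathlib

open CategoryTheory

universe u v

/-- Propositional formulas over a type `Z` of atoms. -/
inductive PropForm (Z : Type v) : Type v
  | bot : PropForm Z
  | atom : Z → PropForm Z
  | neg : PropForm Z → PropForm Z
  | and : PropForm Z → PropForm Z → PropForm Z

/-- Extension of a propositional formula under a valuation of atoms by subsets of `X`. -/
def PropForm.eval {Z : Type v} {X : Type u} (τ : Z → Set X) : PropForm Z → Set X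
  | .bot => ∅
  | .atom z => τ z
  | .neg φ => (PropForm.eval τ φ)ᶜ
  | .and φ ψ => PropForm.eval τ φ ∩ PropForm.eval τ ψ

/-- Substitution of atoms in a propositional formula. -/
def PropForm.map {Z : Type v} {W : Type _} (f : Z → W) : PropForm Z → PropForm W
  | .bot => .bot
  | .atom z => .atom (f z)
  | .neg φ => .neg (PropForm.map f φ)
  | .and φ ψ => .and (PropForm.map f φ) (PropForm.map f ψ)

/-- A finite modal signature for `F`, interpreted by predicate liftings: a finite type of
modalities with arities, each interpreted by a natural predicate lifting. -/
structure ModalSig (F : Type u ⥤ Type u) where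
  Λ : Type
  finite : Finite Λ
  ar : Λ → ℕ
  lift : ∀ (m : Λ) (X : Type u), (Fin (ar m) → Set X) → Set (F.obj X)
  natural : ∀ (m : Λ) (X Y : Type u) (f : X → Y) (A : Fin (ar m) → Set Y),
    lift m X (fun i => f ⁻¹' A i) = F.map (TypeCat.ofHom f) ⁻¹' lift m Y A

/-- `Prop(Λ(Z))`: propositional combinations of modal atoms `♥(z₁,…,z_{ar ♥})` over `Z`. -/
def OSF {F : Type u ⥤ Type u} (S : ModalSig F) (Z : Type v) : Type v :=
  PropForm ((m : S.Λ) × (Fin (S.ar m) → Z))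

/-- Extension of a formula in `Prop(Λ(Z))` in `Set (F.obj X)`, given a valuation
`τ : Z → Set X`. -/
def OSF.ext {F : Type u ⥤ Type u} (S : ModalSig F) {Z : Type v} {X : Type u}
    (τ : Z → Set X) (φ : OSF S Z) : Set (F.obj X) :=
  PropForm.eval (fun a => S.lift a.1 X (fun i => τ (a.2 i))) φ

/-- Substitution of the arguments of modalities in a formula in `Prop(Λ(Z))`. -/
def OSF.map {F : Type u ⥤ Type u} (S : ModalSig F) {Z W : Type _} (f : Z → W) :
    OSF S Z → OSF S W :=
  PropForm.map (fun a => ⟨a.1, fun i => f (a.2 i)⟩)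

/-- A Boolean subalgebra of `Set X`. -/
def IsBoolSubalg {X : Type u} (𝔄 : Set (Set X)) : Prop :=
  ∅ ∈ 𝔄 ∧ Set.univ ∈ 𝔄 ∧ (∀ A ∈ 𝔄, Aᶜ ∈ 𝔄) ∧ (∀ A ∈ 𝔄, ∀ B ∈ 𝔄, A ∪ B ∈ 𝔄) ∧
    (∀ A ∈ 𝔄, ∀ B ∈ 𝔄, A ∩ B ∈ 𝔄)

/-- Interpolable pairs of Boolean subalgebras. -/
def Interpolable {X : Type u} (𝔄₁ 𝔄₂ : Set (Set X)) : Prop :=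
  ∀ A ∈ 𝔄₁, ∀ B ∈ 𝔄₂, A ⊆ B → ∃ C ∈ 𝔄₁ ∩ 𝔄₂, A ⊆ C ∧ C ⊆ B

/-- The logic `L(Λ)` has one-step interpolation: for interpolable finite Boolean
subalgebras `𝔄₁, 𝔄₂` and `φ ∈ Prop(Λ(𝔄₁))`, `ψ ∈ Prop(Λ(𝔄₂))` with `F X ⊨ φ → ψ`,
there is an interpolant `ρ ∈ Prop(Λ(𝔄₁ ∩ 𝔄₂))`. -/
def OneStepInterpolation {F : Type u ⥤ Type u} (S : ModalSig F) : Prop :=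
  ∀ (X : Type u) (𝔄₁ 𝔄₂ : Set (Set X)),
    IsBoolSubalg 𝔄₁ → IsBoolSubalg 𝔄₂ → 𝔄₁.Finite → 𝔄₂.Finite → Interpolable 𝔄₁ 𝔄₂ →
    ∀ (φ : OSF S ↥𝔄₁) (ψ : OSF S ↥𝔄₂),
      OSF.ext S (Subtype.val : ↥𝔄₁ → Set X) φ ⊆ OSF.ext S (Subtype.val : ↥𝔄₂ → Set X) ψ →
      ∃ ρ : OSF S ↥(𝔄₁ ∩ 𝔄₂),
        OSF.ext S (Subtype.val : ↥𝔄₁ → Set X) φ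
          ⊆ OSF.ext S (Subtype.val : ↥(𝔄₁ ∩ 𝔄₂) → Set X) ρ ∧
        OSF.ext S (Subtype.val : ↥(𝔄₁ ∩ 𝔄₂) → Set X) ρ
          ⊆ OSF.ext S (Subtype.val : ↥𝔄₂ → Set X) ψ

/-- The logic `L(Λ)` has uniform one-step interpolation: for finite Boolean subalgebras
`𝔄₀ ⊆ 𝔄₁` and `φ ∈ Prop(Λ(𝔄₁))` there is a single `ρ ∈ Prop(Λ(𝔄₀))` with `F X ⊨ φ → ρ`
interpolating for every `ψ` over an `𝔄₂` interpolable with `𝔄₁` with `𝔄₁ ∩ 𝔄₂ ⊆ 𝔄₀`. -/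
def UniformOneStepInterpolation {F : Type u ⥤ Type u} (S : ModalSig F) : Prop :=
  ∀ (X : Type u) (𝔄₀ 𝔄₁ : Set (Set X)),
    IsBoolSubalg 𝔄₀ → IsBoolSubalg 𝔄₁ → 𝔄₀.Finite → 𝔄₁.Finite → 𝔄₀ ⊆ 𝔄₁ →
    ∀ φ : OSF S ↥𝔄₁, ∃ ρ : OSF S ↥𝔄₀,
      OSF.ext S (Subtype.val : ↥𝔄₁ → Set X) φ
        ⊆ OSF.ext S (Subtype.val : ↥𝔄₀ → Set X) ρ ∧
      ∀ 𝔄₂ : Set (Set X), IsBoolSubalg 𝔄₂ → 𝔄₂.Finite → Interpolable 𝔄₁ 𝔄₂ →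
        𝔄₁ ∩ 𝔄₂ ⊆ 𝔄₀ →
        ∀ ψ : OSF S ↥𝔄₂,
          OSF.ext S (Subtype.val : ↥𝔄₁ → Set X) φ
            ⊆ OSF.ext S (Subtype.val : ↥𝔄₂ → Set X) ψ →
          OSF.ext S (Subtype.val : ↥𝔄₀ → Set X) ρ
            ⊆ OSF.ext S (Subtype.val : ↥𝔄₂ → Set X) ψ

/-- `Λ` is separating for `F`. -/
def Separating {F : Type u ⥤ Type u} (S : ModalSig F) : Prop :=
  ∀ X : Type u, Function.Injective
    (fun t : F.obj X => fun m : S.Λ => {A : Fin (S.ar m) → Set X | t ∈ S.lift m X A})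

/-- `F` preserves finite surjective weak pullbacks. -/
def PreservesFinSurjWeakPB (F : Type u ⥤ Type u) : Prop :=
  ∀ (X Y Z : Type u), Finite X → Finite Y → Finite Z →
    ∀ (f : X → Z) (g : Y → Z), Function.Surjective f → Function.Surjective g →
    ∀ (s : F.obj X) (t : F.obj Y), F.map (TypeCat.ofHom f) s = F.map (TypeCat.ofHom g) t →
      ∃ w : F.obj {p : X × Y // f p.1 = g p.2},
        F.map (TypeCat.ofHom (fun p : {p : X × Y // f p.1 = g p.2} => p.1.1)) w = s ∧
        F.map (TypeCat.ofHom (fun p : {p : X × Y // f p.1 = g p.2} => p.1.2)) w = t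


/-- Finite conjunction of a list of propositional formulas. -/
def PropForm.conjList {Z : Type v} : List (PropForm Z) → PropForm Z
  | [] => .neg .bot
  | φ :: l => .and φ (PropForm.conjList l)

lemma PropForm.mem_eval_conjList {Z : Type v} {X : Type u} (τ : Z → Set X)
    (l : List (PropForm Z)) (x : X) :
    x ∈ PropForm.eval τ (PropForm.conjList l) ↔ ∀ φ ∈ l, x ∈ PropForm.eval τ φ := by
  induction l with
  | nil => simp [PropForm.conjList, PropForm.eval]
  | cons φ l ih => simp [PropForm.conjList, PropForm.eval, ih]

lemma PropForm.eval_preimage {A : Type _} {X Y : Type u} (h : X → Y) (v : A → Set Y)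
    (φ : PropForm A) :
    PropForm.eval (fun a => h ⁻¹' v a) φ = h ⁻¹' PropForm.eval v φ := by
  induction φ <;> simp [PropForm.eval, *]

lemma PropForm.eval_map' {A B : Type _} {X : Type u} (f : A → B) (v : B → Set X)
    (φ : PropForm A) :
    PropForm.eval v (PropForm.map f φ) = PropForm.eval (fun a => v (f a)) φ := by
  induction φ <;> simp [PropForm.eval, PropForm.map, *]

lemma OSF.ext_natural {F : Type u ⥤ Type u} (S : ModalSig F) {Z : Type v} {X Y : Type u}
    (h : X → Y) (τ : Z → Set Y) (φ : OSF S Z) :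
    OSF.ext S (fun z => h ⁻¹' τ z) φ = F.map (TypeCat.ofHom h) ⁻¹' OSF.ext S τ φ := by
  unfold OSF.ext
  have hval : (fun a : (m : S.Λ) × (Fin (S.ar m) → Z) =>
        S.lift a.1 X (fun i => (fun z => h ⁻¹' τ z) (a.2 i)))
      = fun a => F.map (TypeCat.ofHom h) ⁻¹' S.lift a.1 Y (fun i => τ (a.2 i)) := by
    funext a; exact S.natural a.1 X Y h _
  rw [hval]
  exact PropForm.eval_preimage _ _ _

lemma OSF.ext_map' {F : Type u ⥤ Type u} (S : ModalSig F) {Z W : Type _} {X : Type u}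
    (f : Z → W) (τ : W → Set X) (φ : OSF S Z) :
    OSF.ext S τ (OSF.map S f φ) = OSF.ext S (fun z => τ (f z)) φ :=
  PropForm.eval_map' _ _ φ

/-- Characteristic one-step formula of an element of `F.obj X`, for `X` finite and a
separating signature. -/
lemma exists_char_formula {F : Type u ⥤ Type u} (S : ModalSig F) (hsep : Separating S)
    (X : Type u) (hX : Finite X) (s : F.obj X) :
    ∃ φ : OSF S (Set X), OSF.ext S id φ = {s} := by
  haveI := S.finite
  haveI : Finite ((m : S.Λ) × (Fin (S.ar m) → Set X)) := inferInstance
  haveI := Fintype.ofFinite ((m : S.Λ) × (Fin (S.ar m) → Set X))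
  classical
  set T := (m : S.Λ) × (Fin (S.ar m) → Set X)
  let lit : T → PropForm T := fun a =>
    if s ∈ S.lift a.1 X a.2 then PropForm.atom a else PropForm.neg (PropForm.atom a)
  refine ⟨PropForm.conjList ((Finset.univ : Finset T).toList.map lit), ?_⟩
  have hv : (fun a : T => S.lift a.1 X (fun i => id (a.2 i))) = fun a : T => S.lift a.1 X a.2 := rfl
  have key : ∀ s' : F.obj X,
      s' ∈ OSF.ext S (id : Set X → Set X)
        (PropForm.conjList ((Finset.univ : Finset T).toList.map lit)) ↔
      ∀ a : T, (s' ∈ S.lift a.1 X a.2 ↔ s ∈ S.lift a.1 X a.2) := by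
    intro s'
    unfold OSF.ext
    rw [hv, PropForm.mem_eval_conjList]
    constructor
    · intro h a
      have := h (lit a) (by simp [List.mem_map])
      by_cases hs : s ∈ S.lift a.1 X a.2
      · simp only [lit, if_pos hs, PropForm.eval] at this
        exact ⟨fun _ => hs, fun _ => this⟩
      · simp only [lit, if_neg hs, PropForm.eval, Set.mem_compl_iff] at this
        exact ⟨fun h' => absurd h' this, fun h' => absurd h' hs⟩
    · intro h χ hχ
      rw [List.mem_map] at hχ
      obtain ⟨a, _, rfl⟩ := hχ
      by_cases hs : s ∈ S.lift a.1 X a.2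
      · simp only [lit, if_pos hs, PropForm.eval]
        exact (h a).mpr hs
      · simp only [lit, if_neg hs, PropForm.eval, Set.mem_compl_iff]
        exact fun h' => hs ((h a).mp h')
  ext s'
  rw [key s', Set.mem_singleton_iff]
  constructor
  · intro h
    apply hsep X
    funext m
    ext A
    exact h ⟨m, A⟩
  · rintro rfl a; exact Iff.rfl

lemma boolsubalg_range_preimage {X Y : Type u} (h : X → Y) :
    IsBoolSubalg (Set.range fun A : Set Y => h ⁻¹' A) := by
  refine ⟨⟨∅, by simp⟩, ⟨Set.univ, by simp⟩, ?_, ?_, ?_⟩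
  · rintro A ⟨A', rfl⟩; exact ⟨A'ᶜ, rfl⟩
  · rintro A ⟨A', rfl⟩ B ⟨B', rfl⟩; exact ⟨A' ∪ B', rfl⟩
  · rintro A ⟨A', rfl⟩ B ⟨B', rfl⟩; exact ⟨A' ∩ B', rfl⟩

lemma surjective_F_map {F : Type u ⥤ Type u} {X Y : Type u} (h : X → Y)
    (hs : Function.Surjective h) : Function.Surjective (F.map (TypeCat.ofHom h)) := by
  obtain ⟨σ, hσ⟩ := hs.hasRightInverse
  intro t
  refine ⟨F.map (TypeCat.ofHom σ) t, ?_⟩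
  have : F.map (TypeCat.ofHom σ ≫ TypeCat.ofHom h) t
      = F.map (TypeCat.ofHom h) (F.map (TypeCat.ofHom σ) t) :=
    FunctorToTypes.map_comp_apply F _ _ t
  rw [← this]
  have hid : (TypeCat.ofHom σ ≫ TypeCat.ofHom h) = 𝟙 Y := by ext y; exact hσ y
  rw [hid, FunctorToTypes.map_id_apply]

/-- If `Λ` is separating, all interpreting predicate liftings are monotone, and `L(Λ)` has
one-step interpolation, then `F` preserves finite surjective weak pullbacks. -/
theorem one_step_interpolation_implies_preservation
    {F : Type u ⥤ Type u} (S : ModalSig F)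
    (hsep : Separating S)
    (hmono : ∀ (m : S.Λ) (X : Type u) (A B : Fin (S.ar m) → Set X),
      (∀ i, A i ⊆ B i) → S.lift m X A ⊆ S.lift m X B)
    (hint : OneStepInterpolation S) :
    PreservesFinSurjWeakPB F := by
  intro X Y Z hX hY hZ f g hf hg s t hst
  haveI := hX; haveI := hY; haveI := hZ
  by_contra hno
  push_neg at hno
  set P := {p : X × Y // f p.1 = g p.2} with hPdef
  let π₁ : P → X := fun p => p.1.1
  let π₂ : P → Y := fun p => p.1.2
  let q : P → Z := fun p => g p.1.2
  obtain ⟨φs, hφs⟩ := exists_char_formula S hsep X hX s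
  obtain ⟨ψt, hψt⟩ := exists_char_formula S hsep Y hY t
  let 𝔄₁ : Set (Set P) := Set.range fun A : Set X => π₁ ⁻¹' A
  let 𝔄₂ : Set (Set P) := Set.range fun B : Set Y => π₂ ⁻¹' B
  have hinterp : Interpolable 𝔄₁ 𝔄₂ := by
    rintro A ⟨A', rfl⟩ B ⟨B', rfl⟩ hAB
    refine ⟨π₁ ⁻¹' (f ⁻¹' (f '' A')), ⟨⟨f ⁻¹' (f '' A'), rfl⟩, ⟨g ⁻¹' (f '' A'), ?_⟩⟩, ?_, ?_⟩
    · ext p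
      simp only [Set.mem_preimage]
      rw [← p.prop]
    · intro p hp
      exact ⟨p.1.1, hp, rfl⟩
    · rintro p ⟨x, hx, hfx⟩
      have hr : (⟨(x, p.1.2), hfx.trans p.prop⟩ : P) ∈ π₁ ⁻¹' A' := hx
      have hr2 := hAB hr
      exact hr2
  let e₁ : Set X → ↥𝔄₁ := fun A => ⟨π₁ ⁻¹' A, ⟨A, rfl⟩⟩
  let e₂ : Set Y → ↥𝔄₂ := fun B => ⟨π₂ ⁻¹' B, ⟨B, rfl⟩⟩
  let φ : OSF S ↥𝔄₁ := OSF.map S e₁ φs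
  let ψ : OSF S ↥𝔄₂ := PropForm.neg (OSF.map S e₂ ψt)
  have hφ : OSF.ext S (Subtype.val : ↥𝔄₁ → Set P) φ = F.map (TypeCat.ofHom π₁) ⁻¹' {s} := by
    show OSF.ext S (Subtype.val : ↥𝔄₁ → Set P) (OSF.map S e₁ φs) = _
    rw [OSF.ext_map']
    have h1 : (fun A : Set X => ((e₁ A : ↥𝔄₁) : Set P)) = fun A => π₁ ⁻¹' (id A) := rfl
    rw [h1, OSF.ext_natural, hφs]
  have hψ : OSF.ext S (Subtype.val : ↥𝔄₂ → Set P) ψ = (F.map (TypeCat.ofHom π₂) ⁻¹' {t})ᶜ := by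
    show (OSF.ext S (Subtype.val : ↥𝔄₂ → Set P) (OSF.map S e₂ ψt))ᶜ = _
    rw [OSF.ext_map']
    have h2 : (fun B : Set Y => ((e₂ B : ↥𝔄₂) : Set P)) = fun B => π₂ ⁻¹' (id B) := rfl
    rw [h2, OSF.ext_natural, hψt]
  have himp : OSF.ext S (Subtype.val : ↥𝔄₁ → Set P) φ
      ⊆ OSF.ext S (Subtype.val : ↥𝔄₂ → Set P) ψ := by
    rw [hφ, hψ]
    intro w hw ht'
    exact hno w hw ht'
  obtain ⟨ρ, hρ1, hρ2⟩ := hint P 𝔄₁ 𝔄₂ (boolsubalg_range_preimage π₁)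
    (boolsubalg_range_preimage π₂) (Set.finite_range _) (Set.finite_range _) hinterp φ ψ himp
  have hD : ∀ C : ↥(𝔄₁ ∩ 𝔄₂), ∃ D : Set Z, (C : Set P) = q ⁻¹' D := by
    rintro ⟨C, ⟨A, hA⟩, ⟨B, hB⟩⟩
    have hA : π₁ ⁻¹' A = C := hA
    have hB : π₂ ⁻¹' B = C := hB
    refine ⟨f '' A, ?_⟩
    ext p
    simp only [Set.mem_preimage]
    constructor
    · intro hp
      have hx : p ∈ π₁ ⁻¹' A := by rw [hA]; exact hp
      exact ⟨p.1.1, hx, p.prop⟩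
    · rintro ⟨x, hx, hfx⟩
      have hr : (⟨(x, p.1.2), hfx⟩ : P) ∈ π₁ ⁻¹' A := hx
      rw [hA, ← hB] at hr
      have hp2 : p ∈ π₂ ⁻¹' B := hr
      rw [hB] at hp2
      exact hp2
  choose D hDval using hD
  have hvalEq : (Subtype.val : ↥(𝔄₁ ∩ 𝔄₂) → Set P) = fun C => q ⁻¹' D C := funext hDval
  have hρval : OSF.ext S (Subtype.val : ↥(𝔄₁ ∩ 𝔄₂) → Set P) ρ
      = F.map (TypeCat.ofHom q) ⁻¹' OSF.ext S D ρ := by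
    rw [hvalEq, OSF.ext_natural]
  have hπ₁surj : Function.Surjective π₁ := fun x => by
    obtain ⟨y, hy⟩ := hg (f x); exact ⟨⟨(x, y), hy.symm⟩, rfl⟩
  have hπ₂surj : Function.Surjective π₂ := fun y => by
    obtain ⟨x, hx⟩ := hf (g y); exact ⟨⟨(x, y), hx⟩, rfl⟩
  obtain ⟨w₀, hw₀⟩ := surjective_F_map (F := F) π₁ hπ₁surj s
  obtain ⟨w₁, hw₁⟩ := surjective_F_map (F := F) π₂ hπ₂surj t
  have hq1 : ∀ w : F.obj P, F.map (TypeCat.ofHom q) w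
      = F.map (TypeCat.ofHom f) (F.map (TypeCat.ofHom π₁) w) := by
    intro w
    have h1 : F.map (TypeCat.ofHom (fun p : P => f (π₁ p))) w
        = F.map (TypeCat.ofHom f) (F.map (TypeCat.ofHom π₁) w) :=
      FunctorToTypes.map_comp_apply F (TypeCat.ofHom π₁) (TypeCat.ofHom f) w
    have h2 : q = fun p : P => f (π₁ p) := funext fun p => p.prop.symm
    rw [h2, h1]
  have hq2 : ∀ w : F.obj P, F.map (TypeCat.ofHom q) w
      = F.map (TypeCat.ofHom g) (F.map (TypeCat.ofHom π₂) w) := by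
    intro w
    exact FunctorToTypes.map_comp_apply F (TypeCat.ofHom π₂) (TypeCat.ofHom g) w
  have hw₀φ : w₀ ∈ OSF.ext S (Subtype.val : ↥𝔄₁ → Set P) φ := by
    rw [hφ]
    simp only [Set.mem_preimage, hw₀, Set.mem_singleton_iff]
  have hE : F.map (TypeCat.ofHom f) s ∈ OSF.ext S D ρ := by
    have h' := hρ1 hw₀φ
    rw [hρval] at h'
    have h'' : F.map (TypeCat.ofHom q) w₀ ∈ OSF.ext S D ρ := h'
    rw [hq1 w₀, hw₀] at h''
    exact h''
  have hw₁ρ : w₁ ∈ OSF.ext S (Subtype.val : ↥(𝔄₁ ∩ 𝔄₂) → Set P) ρ := by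
    rw [hρval]
    show F.map (TypeCat.ofHom q) w₁ ∈ OSF.ext S D ρ
    rw [hq2 w₁, hw₁, ← hst]
    exact hE
  have hfin := hρ2 hw₁ρ
  rw [hψ] at hfin
  exact hfin (by simp only [Set.mem_preimage, hw₁, Set.mem_singleton_iff])
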